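/- Let f : ℝ_{≥0}^T → ℝ_{≥0} be monotone, convex, differentiable with f(0) = 0 and ⟨∇f(x), x⟩ ≤ q·f(x) for some q > 1. Then for any 0 < γ < 1 and y ∈ ℝ_{≥0}^T, f*(γ∇f(y)) ≤ γ^{q/(q−1)} (q−1) f(y). -/

import Mathlib

/-!
Read `g` as `∇f` and write `w = s • u` with `s = γ ^ (1 / (q - 1))`, so that `γ * s = s ^ q`.
The growth condition makes `t ↦ f (t • u) / t ^ q` nonincreasing, whence `s ^ q * f u ≤ f w`
as `s ≤ 1`; the gradient inequality of convexity gives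
`⟪∇f y, u⟫ - f u ≤ ⟪∇f y, y⟫ - f y ≤ (q - 1) * f y`. Hence
`⟪w, γ • ∇f y⟫ - f w ≤ s ^ q * (⟪∇f y, u⟫ - f u) ≤ γ ^ (q / (q - 1)) * (q - 1) * f y`.
-/

open Finset

noncomputable def fenchelStar {T : ℕ} (f : (Fin T → ℝ) → ℝ) (y : Fin T → ℝ) : EReal :=
  ⨆ w ∈ {w : Fin T → ℝ | 0 ≤ w}, ((∑ i, w i * y i - f w : ℝ) : EReal)

theorem ConvexOn.le_sub_of_hasDerivAt_lineMap {E : Type*} [AddCommGroup E] [Module ℝ E]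
    {s : Set E} {f : E → ℝ} (hf : ConvexOn ℝ s f) {x y : E} (hx : x ∈ s) (hy : y ∈ s) {d : ℝ}
    (hd : HasDerivAt (fun t : ℝ => f (x + t • (y - x))) d 0) :
    d ≤ f y - f x := by
  have hline : ConvexOn ℝ (AffineMap.lineMap x y ⁻¹' s) (f ∘ AffineMap.lineMap x y) :=
    hf.comp_affineMap _
  have hd' : HasDerivAt (f ∘ AffineMap.lineMap x y) d (0 : ℝ) := by
    convert hd using 2 with t
    simp [AffineMap.lineMap_apply_module', add_comm]
  simpa [slope_def_field] using hline.le_slope_of_hasDerivAt (x := 0) (y := 1)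
    (by simpa using hx) (by simpa using hy) zero_lt_one hd'

theorem antitoneOn_mul_rpow_neg_of_mul_deriv_le {φ φ' : ℝ → ℝ} {q : ℝ}
    (hφ : ∀ t > 0, HasDerivAt φ (φ' t) t) (hgrowth : ∀ t > 0, t * φ' t ≤ q * φ t) :
    AntitoneOn (fun t => φ t * t ^ (-q)) (Set.Ioi 0) := by
  refine antitoneOn_of_hasDerivWithinAt_nonpos (convex_Ioi 0)
    (f' := fun t => φ' t * t ^ (-q) + φ t * (-q * t ^ (-q - 1))) ?_ ?_ ?_
  · exact fun t ht => ((hφ t ht).continuousAt.mul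
      (Real.continuousAt_rpow_const _ _ (Or.inl (ne_of_gt ht)))).continuousWithinAt
  · rw [interior_Ioi]
    exact fun t ht => ((hφ t ht).mul
      (Real.hasDerivAt_rpow_const (Or.inl (ne_of_gt ht)))).hasDerivWithinAt
  · rw [interior_Ioi]
    intro t (ht : 0 < t)
    have hpow : t ^ (-q) = t * t ^ (-q - 1) := by
      rw [mul_comm, ← Real.rpow_add_one ht.ne']; ring_nf
    calc φ' t * t ^ (-q) + φ t * (-q * t ^ (-q - 1))
        = (t * φ' t - q * φ t) * t ^ (-q - 1) := by rw [hpow]; ring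
      _ ≤ 0 := mul_nonpos_of_nonpos_of_nonneg (by linarith [hgrowth t ht])
          (Real.rpow_nonneg ht.le _)

section GradientBounds

variable {T : ℕ} {f : (Fin T → ℝ) → ℝ} {g : (Fin T → ℝ) → (Fin T → ℝ)}

theorem sum_grad_mul_sub_le (hconv : ConvexOn ℝ {w : Fin T → ℝ | 0 ≤ w} f)
    (hdiff : ∀ x v : Fin T → ℝ, HasDerivAt (fun t : ℝ => f (x + t • v)) (∑ i, g x i * v i) 0)
    {y u : Fin T → ℝ} (hy : 0 ≤ y) (hu : 0 ≤ u) :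
    ∑ i, g y i * (u i - y i) ≤ f u - f y :=
  hconv.le_sub_of_hasDerivAt_lineMap hy hu (hdiff y (u - y))

theorem hasDerivAt_apply_smul
    (hdiff : ∀ x v : Fin T → ℝ, HasDerivAt (fun t : ℝ => f (x + t • v)) (∑ i, g x i * v i) 0)
    (u : Fin T → ℝ) (t : ℝ) :
    HasDerivAt (fun τ : ℝ => f (τ • u)) (∑ i, g (t • u) i * u i) t := by
  have h := HasDerivAt.comp_sub_const t t (by rw [sub_self]; exact hdiff (t • u) u)
  simpa only [← add_smul, add_sub_cancel] using h

theorem rpow_mul_le_apply_smul {q : ℝ}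
    (hdiff : ∀ x v : Fin T → ℝ, HasDerivAt (fun t : ℝ => f (x + t • v)) (∑ i, g x i * v i) 0)
    (hgrowth : ∀ x, 0 ≤ x → ∑ i, g x i * x i ≤ q * f x)
    {u : Fin T → ℝ} (hu : 0 ≤ u) {s : ℝ} (hs0 : 0 < s) (hs1 : s ≤ 1) :
    s ^ q * f u ≤ f (s • u) := by
  have hanti := antitoneOn_mul_rpow_neg_of_mul_deriv_le (q := q)
    (fun t _ => hasDerivAt_apply_smul hdiff u t) fun t ht => by
      simpa only [mul_sum, Pi.smul_apply, smul_eq_mul, mul_left_comm t]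
        using hgrowth (t • u) (smul_nonneg ht.le hu)
  have h := hanti (Set.mem_Ioi.mpr hs0) (Set.mem_Ioi.mpr one_pos) hs1
  simp only [one_smul, Real.one_rpow, mul_one] at h
  calc s ^ q * f u ≤ s ^ q * (f (s • u) * s ^ (-q)) := by gcongr
    _ = f (s • u) := by rw [Real.rpow_neg hs0.le]; field_simp

theorem sum_mul_smul_grad_sub_le {q : ℝ} (hq : 1 < q)
    (hconv : ConvexOn ℝ {w : Fin T → ℝ | 0 ≤ w} f)
    (hdiff : ∀ x v : Fin T → ℝ, HasDerivAt (fun t : ℝ => f (x + t • v)) (∑ i, g x i * v i) 0)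
    (hgrowth : ∀ x, 0 ≤ x → ∑ i, g x i * x i ≤ q * f x)
    {γ : ℝ} (hγ0 : 0 < γ) (hγ1 : γ < 1) {y w : Fin T → ℝ} (hy : 0 ≤ y) (hw : 0 ≤ w) :
    ∑ i, w i * (γ • g y) i - f w ≤ γ ^ (q / (q - 1)) * (q - 1) * f y := by
  have hq1 : 0 < q - 1 := by linarith
  set s := γ ^ (q - 1)⁻¹
  have hs0 : 0 < s := Real.rpow_pos_of_pos hγ0 _
  have hs1 : s ≤ 1 := Real.rpow_le_one hγ0.le hγ1.le (inv_pos.mpr hq1).le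
  have hsq : s ^ q = γ ^ (q / (q - 1)) := by
    rw [← Real.rpow_mul hγ0.le, inv_mul_eq_div]
  have hγs : γ * s = s ^ q := by
    rw [hsq, ← Real.rpow_one_add' hγ0.le (add_pos one_pos (inv_pos.mpr hq1)).ne']
    congr 1
    field_simp
    ring
  set u := s⁻¹ • w
  have hu : 0 ≤ u := smul_nonneg (inv_nonneg.mpr hs0.le) hw
  have hwu : w = s • u := (smul_inv_smul₀ hs0.ne' w).symm
  have hpair : ∑ i, w i * (γ • g y) i = s ^ q * ∑ i, g y i * u i := by
    rw [← hγs, hwu, mul_sum]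
    exact sum_congr rfl fun i _ => by simp only [Pi.smul_apply, smul_eq_mul]; ring
  have hsplit : ∑ i, g y i * (u i - y i) = ∑ i, g y i * u i - ∑ i, g y i * y i := by
    simp only [mul_sub, sum_sub_distrib]
  calc ∑ i, w i * (γ • g y) i - f w
      ≤ s ^ q * (∑ i, g y i * u i - f u) := by
        rw [hpair, hwu]
        linarith [rpow_mul_le_apply_smul hdiff hgrowth hu hs0 hs1]
    _ ≤ s ^ q * ((q - 1) * f y) := by
        gcongr
        linarith [sum_grad_mul_sub_le hconv hdiff hy hu, hgrowth y hy]
    _ = γ ^ (q / (q - 1)) * (q - 1) * f y := by rw [hsq]; ring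

end GradientBounds

theorem conjugate_of_scaled_gradient_general {T : ℕ} (f : (Fin T → ℝ) → ℝ)
    (g : (Fin T → ℝ) → (Fin T → ℝ)) (q : ℝ) (hq : 1 < q)
    (hconv : ConvexOn ℝ {w : Fin T → ℝ | 0 ≤ w} f)
    (hdiff : ∀ x v : Fin T → ℝ, HasDerivAt (fun t : ℝ => f (x + t • v)) (∑ i, g x i * v i) 0)
    (hgrowth : ∀ x, 0 ≤ x → ∑ i, g x i * x i ≤ q * f x)
    (γ : ℝ) (hγ0 : 0 < γ) (hγ1 : γ < 1) (y : Fin T → ℝ) (hy : 0 ≤ y) :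
    fenchelStar f (γ • g y) ≤ ((γ ^ (q / (q - 1)) * (q - 1) * f y : ℝ) : EReal) :=
  iSup₂_le fun _ hw => EReal.coe_le_coe_iff.mpr <|
    sum_mul_smul_grad_sub_le hq hconv hdiff hgrowth hγ0 hγ1 hy hw

theorem conjugate_of_scaled_gradient {T : ℕ} (f : (Fin T → ℝ) → ℝ)
    (g : (Fin T → ℝ) → (Fin T → ℝ)) (q : ℝ) (hq : 1 < q)
    (hnonneg : ∀ x, 0 ≤ x → 0 ≤ f x)
    (hmono : ∀ x y : Fin T → ℝ, 0 ≤ x → x ≤ y → f x ≤ f y)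
    (hconv : ConvexOn ℝ {w : Fin T → ℝ | 0 ≤ w} f)
    (hdiff : ∀ x v : Fin T → ℝ, HasDerivAt (fun t : ℝ => f (x + t • v)) (∑ i, g x i * v i) 0)
    (hf0 : f 0 = 0)
    (hgrowth : ∀ x, 0 ≤ x → ∑ i, g x i * x i ≤ q * f x)
    (γ : ℝ) (hγ0 : 0 < γ) (hγ1 : γ < 1) (y : Fin T → ℝ) (hy : 0 ≤ y) :
    fenchelStar f (γ • g y) ≤ ((γ ^ (q / (q - 1)) * (q - 1) * f y : ℝ) : EReal) :=
  conjugate_of_scaled_gradient_general f g q hq hconv hdiff hgrowth γ hγ0 hγ1 y hy
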